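/- arXiv:1801.01384 — 3 statements merged into one kernel-verified Lean document; each statement's English description precedes it below -/
import Mathlib

section
/- Let (L,·,\,/) be a loop with A(L)-holomorph (H,∘). Then (H,∘) is a middle Bol loop if and only if for every x∈L and every δ∈A(L), the triple ⟨δ⁻¹𝕃ₓδ, ℛₓ, ℛₓL_{xδ}⟩ is an anti-autotopism of (L,·); elementwise, if and only if ((x/(zδ⁻¹))δ)·(y\x) = (xδ)·((y·z)\x) for all x,y,z∈L and δ∈A(L). -/
/-!
Write elements of the holomorph as `(a, x)` with `a ∈ A(L)`. Both divisions of the holomorph are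
explicit (`(a,x) \ (b,y) = (a⁻¹b, (x(a⁻¹b)) \ y)` and `(b,y) / (a,x) = (ba⁻¹, (y/x)a⁻¹)` in
right-action notation), so both sides of the middle Bol identity for `(a,x), (b,y), (c,z)` can be
computed: their first components agree, and, with `δ = (bc)⁻¹a`, their second components are
`(xδ)·(((yβ)·(zδ)) \ x)` and `((x/z)δ)·((yβ) \ x)` for a certain `β ∈ A(L)`. As `yβ` and `zδ`
range over all of `L`, the middle Bol identity in the holomorph is the twisted identity
`((x/(zδ⁻¹))δ)·(y\x) = (xδ)·((y·z)\x)`, which is the anti-autotopism condition read pointwise; the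
bijectivity of the three maps holds in every loop.
-/

/-- A loop `(L, ·, \, /)` with identity `e`: `mul` is the multiplication,
`ld` the left division (`ld x y = x \ y`), `rd` the right division (`rd x y = x / y`). -/
structure LoopStr (α : Type*) where
  mul : α → α → α
  ld : α → α → α
  rd : α → α → α
  e : α
  mul_ld : ∀ x y, mul x (ld x y) = y
  rd_mul : ∀ x y, mul (rd y x) x = y
  ld_mul : ∀ x y, ld x (mul x y) = y
  mul_rd : ∀ x y, rd (mul y x) x = y
  e_mul : ∀ x, mul e x = x
  mul_e : ∀ x, mul x e = x

namespace LoopStr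

variable {α : Type*}

/-- The middle Bol identity `x(yz \ x) = (x/z)(y \ x)`. -/
def IsMiddleBol (Q : LoopStr α) : Prop :=
  ∀ x y z, Q.mul x (Q.ld (Q.mul y z) x) = Q.mul (Q.rd x z) (Q.ld y x)

/-- The subgroup `A` of permutations of `L` consists of automorphisms of `(L,·)`,
i.e. `A ≤ AUT(L,·)`. -/
def IsAutSubgroup (Q : LoopStr α) (A : Subgroup (Equiv.Perm α)) : Prop :=
  ∀ θ ∈ A, ∀ x y, θ (Q.mul x y) = Q.mul (θ x) (θ y)

/-- Holomorph multiplication `(α,x)∘(β,y) = (αβ, xβ·y)`.  Maps are written on the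
right and composed left to right, so `αβ` ("first `α`, then `β`") is `β * α`
in Mathlib's convention, and `xβ` is `β x`. -/
def hmul (Q : LoopStr α) (A : Subgroup (Equiv.Perm α)) (p q : A × α) : A × α :=
  (q.1 * p.1, Q.mul ((q.1 : Equiv.Perm α) p.2) q.2)

end LoopStr

/-- An anti-autotopism of `(L,·)`: a triple `⟨U,V,W⟩` of bijections of `L` such that
`xU · yV = (y·x)W` for all `x,y ∈ L`. -/
def LoopStr.IsAntiATP {α : Type*} (Q : LoopStr α) (U V W : α → α) : Prop :=
  Function.Bijective U ∧ Function.Bijective V ∧ Function.Bijective W ∧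
    ∀ x y, Q.mul (U x) (V y) = W (Q.mul y x)

namespace LoopStr

variable {α : Type*} (Q : LoopStr α)

theorem ld_eq_of_mul_eq {x y z : α} (h : Q.mul x z = y) : Q.ld x y = z := by
  rw [← h, Q.ld_mul]

theorem rd_eq_of_mul_eq {x y z : α} (h : Q.mul z x = y) : Q.rd y x = z := by
  rw [← h, Q.mul_rd]

theorem bijective_mul_left (x : α) : Function.Bijective (Q.mul x) :=
  Function.bijective_iff_has_inverse.mpr ⟨Q.ld x, Q.ld_mul x, Q.mul_ld x⟩

theorem bijective_ld_left (x : α) : Function.Bijective (fun y => Q.ld y x) :=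
  Function.bijective_iff_has_inverse.mpr
    ⟨Q.rd x, fun y => Q.rd_eq_of_mul_eq (Q.mul_ld y x),
      fun z => Q.ld_eq_of_mul_eq (Q.rd_mul z x)⟩

theorem bijective_rd_right (x : α) : Function.Bijective (Q.rd x) :=
  Function.bijective_iff_has_inverse.mpr
    ⟨fun y => Q.ld y x, fun z => Q.ld_eq_of_mul_eq (Q.rd_mul z x),
      fun y => Q.rd_eq_of_mul_eq (Q.mul_ld y x)⟩

theorem isAntiATP_iff (δ : Equiv.Perm α) (x : α) :
    Q.IsAntiATP (fun z => δ (Q.rd x (δ⁻¹ z))) (fun y => Q.ld y x)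
        (fun z => Q.mul (δ x) (Q.ld z x)) ↔
      ∀ y z, Q.mul (δ (Q.rd x (δ⁻¹ z))) (Q.ld y x) = Q.mul (δ x) (Q.ld (Q.mul y z) x) :=
  ⟨fun h y z => h.2.2.2 z y, fun h =>
    ⟨δ.bijective.comp ((Q.bijective_rd_right x).comp δ⁻¹.bijective), Q.bijective_ld_left x,
      (Q.bijective_mul_left (δ x)).comp (Q.bijective_ld_left x), fun z y => h y z⟩⟩

section Holomorph

variable {A : Subgroup (Equiv.Perm α)} {H : LoopStr (A × α)}

theorem holomorph_ld (hm : ∀ p q, H.mul p q = Q.hmul A p q) (a b : A) (x y : α) :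
    H.ld (a, x) (b, y) = (b * a⁻¹, Q.ld (((b * a⁻¹ : A) : Equiv.Perm α) x) y) := by
  refine H.ld_eq_of_mul_eq ?_
  simp [hm, hmul, Q.mul_ld]

theorem holomorph_rd (hm : ∀ p q, H.mul p q = Q.hmul A p q) (a b : A) (x y : α) :
    H.rd (b, y) (a, x) = (a⁻¹ * b, ((a⁻¹ : A) : Equiv.Perm α) (Q.rd y x)) := by
  refine H.rd_eq_of_mul_eq ?_
  simp [hm, hmul, Q.rd_mul]

theorem holomorph_mul_ld_mul (hA : Q.IsAutSubgroup A) (hm : ∀ p q, H.mul p q = Q.hmul A p q)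
    (a b c : A) (x y z : α) :
    H.mul (a, x) (H.ld (H.mul (b, y) (c, z)) (a, x)) =
      (a * (c * b)⁻¹ * a, Q.mul (((a * (c * b)⁻¹ : A) : Equiv.Perm α) x)
        (Q.ld (Q.mul (((a * b⁻¹ : A) : Equiv.Perm α) y) (((a * (c * b)⁻¹ : A) : Equiv.Perm α) z))
          x)) := by
  have hcomp : a * (c * b)⁻¹ * c = a * b⁻¹ := by group
  rw [hm, hm, hmul, Q.holomorph_ld hm, hmul, hA _ (a * (c * b)⁻¹ : A).2, ← Equiv.Perm.mul_apply,
    ← Subgroup.coe_mul, hcomp]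

theorem holomorph_rd_mul_ld (hm : ∀ p q, H.mul p q = Q.hmul A p q) (a b c : A) (x y z : α) :
    H.mul (H.rd (a, x) (c, z)) (H.ld (b, y) (a, x)) =
      (a * (c * b)⁻¹ * a, Q.mul (((a * (c * b)⁻¹ : A) : Equiv.Perm α) (Q.rd x z))
        (Q.ld (((a * b⁻¹ : A) : Equiv.Perm α) y) x)) := by
  have hcomp : a * b⁻¹ * c⁻¹ = a * (c * b)⁻¹ := by group
  rw [Q.holomorph_rd hm, Q.holomorph_ld hm, hm, hmul, ← Equiv.Perm.mul_apply, ← Subgroup.coe_mul,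
    ← mul_assoc, hcomp]

theorem holomorph_isMiddleBol_iff (hA : Q.IsAutSubgroup A)
    (hm : ∀ p q, H.mul p q = Q.hmul A p q) :
    H.IsMiddleBol ↔ ∀ δ ∈ A, ∀ x y z : α,
      Q.mul (δ (Q.rd x (δ⁻¹ z))) (Q.ld y x) = Q.mul (δ x) (Q.ld (Q.mul y z) x) := by
  simp only [IsMiddleBol, Prod.forall, Q.holomorph_mul_ld_mul hA hm, Q.holomorph_rd_mul_ld hm,
    Prod.mk.injEq, true_and]
  constructor
  · intro h δ hδ x y z
    simpa using (h 1 x 1 y ⟨δ, hδ⟩⁻¹ (δ⁻¹ z)).symm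
  · intro h a x b y c z
    simpa using (h _ (a * (c * b)⁻¹ : A).2 x (((a * b⁻¹ : A) : Equiv.Perm α) y)
      (((a * (c * b)⁻¹ : A) : Equiv.Perm α) z)).symm

end Holomorph

end LoopStr

/-- Let `(L,·,\,/)` be a loop with `A(L)`-holomorph `(H,∘)`.  Then `(H,∘)`
is a middle Bol loop if and only if for every `x ∈ L` and every `δ ∈ A(L)` the triple
`⟨δ⁻¹𝕃ₓδ, ℛₓ, ℛₓL_{xδ}⟩` is an anti-autotopism of `(L,·)` (maps written on the right,
composed left to right: `z(δ⁻¹𝕃ₓδ) = (x/(zδ⁻¹))δ`, `yℛₓ = y\x`, `z(ℛₓL_{xδ}) = (xδ)·(z\x)`);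
elementwise, if and only if `((x/(zδ⁻¹))δ)·(y\x) = (xδ)·((y·z)\x)` for all `x,y,z ∈ L`
and `δ ∈ A(L)`. -/
theorem holomorph_middleBol_iff_antiAutotopism {α : Type*} (Q : LoopStr α)
    (A : Subgroup (Equiv.Perm α)) (hA : Q.IsAutSubgroup A) :
    ∀ H : LoopStr (A × α), (∀ p q, H.mul p q = Q.hmul A p q) →
      ((H.IsMiddleBol ↔
          ∀ x : α, ∀ δ ∈ A,
            Q.IsAntiATP (fun z => δ (Q.rd x (δ⁻¹ z))) (fun y => Q.ld y x)
              (fun z => Q.mul (δ x) (Q.ld z x))) ∧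
        (H.IsMiddleBol ↔
          ∀ δ ∈ A, ∀ x y z : α,
            Q.mul (δ (Q.rd x (δ⁻¹ z))) (Q.ld y x) = Q.mul (δ x) (Q.ld (Q.mul y z) x))) := by
  intro H hm
  have hBol := Q.holomorph_isMiddleBol_iff hA hm
  refine ⟨hBol.trans ⟨fun h x δ hδ => (Q.isAntiATP_iff δ x).2 (h δ hδ x),
    fun h δ hδ x => (Q.isAntiATP_iff δ x).1 (h x δ hδ)⟩, hBol⟩
end

section
/- Let (L,·,\,/) be a commutative loop with A(L)-holomorph (H,∘). Then (H,∘) is a commutative loop if and only if A(L) is an abelian group and, for all α,β∈A(L), the triple (β,α⁻¹,I) is an autotopism of (L,·), i.e., (xβ)·(yα⁻¹) = x·y for all x,y∈L. -/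
/-- An autotopism of `(L,·)`: a triple `(U,V,W)` of bijections of `L` such that
`xU · yV = (x·y)W` for all `x,y ∈ L`. -/
def LoopStr.IsATP {α : Type*} (Q : LoopStr α) (U V W : α → α) : Prop :=
  Function.Bijective U ∧ Function.Bijective V ∧ Function.Bijective W ∧
    ∀ x y, Q.mul (U x) (V y) = W (Q.mul x y)

namespace LoopStr

variable {α : Type*}

theorem hmul_comm_iff (Q : LoopStr α) (A : Subgroup (Equiv.Perm α)) :
    (∀ p q : A × α, Q.hmul A p q = Q.hmul A q p) ↔
      (∀ a ∈ A, ∀ b ∈ A, a * b = b * a) ∧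
        ∀ a ∈ A, ∀ b ∈ A, ∀ x y, Q.mul (b x) y = Q.mul (a y) x := by
  constructor
  · intro h
    refine ⟨fun a ha b hb => ?_, fun a ha b hb x y => ?_⟩
    · exact congrArg (fun r => (r.1 : Equiv.Perm α)) (h (⟨b, hb⟩, Q.e) (⟨a, ha⟩, Q.e))
    · exact congrArg Prod.snd (h (⟨a, ha⟩, x) (⟨b, hb⟩, y))
  · rintro ⟨hA, hL⟩ ⟨⟨a, ha⟩, x⟩ ⟨⟨b, hb⟩, y⟩
    exact Prod.ext (Subtype.ext (hA b hb a ha)) (hL a ha b hb x y)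

theorem isATP_perm_perm_id_iff (Q : LoopStr α) (σ τ : Equiv.Perm α) :
    Q.IsATP σ τ id ↔ ∀ x y, Q.mul (σ x) (τ y) = Q.mul x y :=
  ⟨fun h => h.2.2.2, fun h => ⟨σ.bijective, τ.bijective, Function.bijective_id, h⟩⟩

theorem mul_apply_eq_mul_apply_iff_of_comm (Q : LoopStr α)
    (hcomm : ∀ x y, Q.mul x y = Q.mul y x) (a b : Equiv.Perm α) :
    (∀ x y, Q.mul (b x) y = Q.mul (a y) x) ↔ ∀ x y, Q.mul (b x) (a⁻¹ y) = Q.mul x y := by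
  simp only [Equiv.Perm.coe_inv]
  constructor
  · intro h x y
    rw [h, Equiv.apply_symm_apply, hcomm]
  · intro h x y
    rw [hcomm (a y), ← h x (a y), Equiv.symm_apply_apply]

end LoopStr

theorem holomorph_of_comm_commutative_iff_general {α : Type*} (Q : LoopStr α)
    (hcomm : ∀ x y, Q.mul x y = Q.mul y x)
    (A : Subgroup (Equiv.Perm α)) :
    (∀ p q : A × α, Q.hmul A p q = Q.hmul A q p) ↔
      ((∀ a ∈ A, ∀ b ∈ A, a * b = b * a) ∧
        ∀ a ∈ A, ∀ b ∈ A,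
          Q.IsATP (fun x => b x) (fun y => a⁻¹ y) id) := by
  rw [Q.hmul_comm_iff A]
  refine and_congr_right fun _ => forall₄_congr fun a _ b _ => ?_
  rw [Q.mul_apply_eq_mul_apply_iff_of_comm hcomm a b]
  exact (Q.isATP_perm_perm_id_iff b a⁻¹).symm

/-- Let `(L,·,\,/)` be a commutative loop with `A(L)`-holomorph `(H,∘)`.
Then `(H,∘)` is a commutative loop if and only if `A(L)` is an abelian group and, for
all `α,β ∈ A(L)`, the triple `(β, α⁻¹, I)` is an autotopism of `(L,·)`, i.e.
`(xβ)·(yα⁻¹) = x·y` for all `x,y ∈ L`. -/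
theorem holomorph_of_comm_commutative_iff {α : Type*} (Q : LoopStr α)
    (hcomm : ∀ x y, Q.mul x y = Q.mul y x)
    (A : Subgroup (Equiv.Perm α)) (hA : Q.IsAutSubgroup A) :
    (∀ p q : A × α, Q.hmul A p q = Q.hmul A q p) ↔
      ((∀ a ∈ A, ∀ b ∈ A, a * b = b * a) ∧
        ∀ a ∈ A, ∀ b ∈ A,
          Q.IsATP (fun x => b x) (fun y => a⁻¹ y) id) :=
  holomorph_of_comm_commutative_iff_general Q hcomm A
end

section
/- Let (Q,·,\,/) be a right Bol loop with identity e and define x∘y = (y·(x·y⁻¹))·y, where y⁻¹ := y\e. Then (Q,∘) is a middle Bol loop: it is a loop with identity e and it satisfies the middle Bol identity x∘((y∘z)\'x) = (x/'z)∘(y\'x) for all x,y,z∈Q, where \' and /' denote the left and right divisions of (Q,∘). -/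
/-- Right Bol identity `((x·y)·z)·y = x·((y·z)·y)`. -/
def LoopStr.IsRightBol {α : Type*} (Q : LoopStr α) : Prop :=
  ∀ x y z, Q.mul (Q.mul (Q.mul x y) z) y = Q.mul x (Q.mul (Q.mul y z) y)

namespace LoopStr

variable {α : Type*} (Q : LoopStr α)

def inv (x : α) : α := Q.ld x Q.e

lemma mul_inv_cancel (x : α) : Q.mul x (Q.inv x) = Q.e := Q.mul_ld x Q.e

lemma mul_right_cancel {a b x : α} (h : Q.mul a x = Q.mul b x) : a = b := by
  simpa only [Q.mul_rd] using congrArg (fun t => Q.rd t x) h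

lemma mul_left_cancel {a b x : α} (h : Q.mul x a = Q.mul x b) : a = b := by
  simpa only [Q.ld_mul] using congrArg (Q.ld x) h

lemma e_ld (x : α) : Q.ld Q.e x = x := by
  simpa only [Q.e_mul] using Q.ld_mul Q.e x

lemma inv_e : Q.inv Q.e = Q.e := Q.e_ld Q.e

lemma rd_ld_cancel (a x : α) : Q.ld (Q.rd a x) a = x := by
  simpa only [Q.rd_mul] using Q.ld_mul (Q.rd a x) x

lemma ld_rd_cancel (x y : α) : Q.rd x (Q.ld y x) = y := by
  simpa only [Q.mul_ld] using Q.mul_rd (Q.ld y x) y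

variable {Q}

lemma mul_inv_cancel_right (hRB : Q.IsRightBol) (a x : α) :
    Q.mul (Q.mul a x) (Q.inv x) = a := by
  apply Q.mul_right_cancel (x := x)
  simpa only [Q.mul_inv_cancel, Q.e_mul] using hRB a x (Q.inv x)

lemma inv_mul_cancel (hRB : Q.IsRightBol) (x : α) : Q.mul (Q.inv x) x = Q.e := by
  apply Q.mul_right_cancel (x := Q.inv x)
  rw [mul_inv_cancel_right hRB, Q.e_mul]

lemma inv_inv (hRB : Q.IsRightBol) (x : α) : Q.inv (Q.inv x) = x := by
  apply Q.mul_left_cancel (x := Q.inv x)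
  rw [Q.mul_inv_cancel, inv_mul_cancel hRB]

lemma inv_mul_cancel_right (hRB : Q.IsRightBol) (a x : α) :
    Q.mul (Q.mul a (Q.inv x)) x = a := by
  simpa only [inv_inv hRB] using mul_inv_cancel_right hRB a (Q.inv x)

lemma rd_ld_eq_mul_rd_ld_mul (hRB : Q.IsRightBol) (s a x : α) :
    Q.ld (Q.rd a x) x = Q.ld (Q.rd (Q.mul s a) x) (Q.mul s x) := by
  set t := Q.ld (Q.rd a x) x
  have hxt : Q.mul x (Q.inv t) = Q.rd a x := by
    conv_lhs => rw [← Q.mul_ld (Q.rd a x) x]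
    exact mul_inv_cancel_right hRB _ _
  have hsa : Q.rd (Q.mul s a) x = Q.mul (Q.mul s x) (Q.inv t) := by
    have bol := hRB s x (Q.inv t)
    rw [hxt, Q.rd_mul] at bol
    rw [← bol, Q.mul_rd]
  apply Q.mul_left_cancel (x := Q.rd (Q.mul s a) x)
  rw [Q.mul_ld, hsa, inv_mul_cancel_right hRB]

variable (Q)

def star (x y : α) : α := Q.mul (Q.mul y (Q.mul x (Q.inv y))) y

variable {Q}

lemma star_eq_inv_ld (hRB : Q.IsRightBol) (x y : α) : Q.star x y = Q.ld (Q.inv y) x := by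
  apply Q.mul_left_cancel (x := Q.inv y)
  have bol := hRB (Q.inv y) y (Q.mul x (Q.inv y))
  rw [inv_mul_cancel hRB, Q.e_mul, inv_mul_cancel_right hRB] at bol
  rw [Q.mul_ld, star, ← bol]

def starLoop (hRB : Q.IsRightBol) : LoopStr α where
  mul := Q.star
  ld a x := Q.inv (Q.rd a x)
  rd x z := Q.mul (Q.inv z) x
  e := Q.e
  mul_ld a x := by rw [star_eq_inv_ld hRB, inv_inv hRB, Q.rd_ld_cancel]
  rd_mul z x := by rw [star_eq_inv_ld hRB, Q.ld_mul]
  ld_mul x y := by rw [star_eq_inv_ld hRB, Q.ld_rd_cancel, inv_inv hRB]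
  mul_rd x y := by rw [star_eq_inv_ld hRB, Q.mul_ld]
  e_mul x := by rw [star_eq_inv_ld hRB]; exact inv_inv hRB x
  mul_e x := by rw [star_eq_inv_ld hRB, Q.inv_e, Q.e_ld]

lemma starLoop_isMiddleBol (hRB : Q.IsRightBol) : (Q.starLoop hRB).IsMiddleBol := by
  intro x y z
  simp only [starLoop, star_eq_inv_ld hRB, inv_inv hRB]
  have h := rd_ld_eq_mul_rd_ld_mul hRB (Q.inv z) (Q.ld (Q.inv z) y) x
  rwa [Q.mul_ld] at h

end LoopStr

/-- Let `(Q,·,\,/)` be a right Bol loop with identity `e` and define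
`x∘y = (y·(x·y⁻¹))·y` where `y⁻¹ := y\e`.  Then `(Q,∘)` is a middle Bol loop: it is a
loop with identity `e` (i.e. there is a loop structure `P` with multiplication `∘` and
identity `e`) and it satisfies the middle Bol identity with respect to its own
divisions. -/
theorem rightBol_star_isMiddleBol {α : Type*} (Q : LoopStr α) (hRB : Q.IsRightBol) :
    ∃ P : LoopStr α,
      (∀ x y, P.mul x y = Q.mul (Q.mul y (Q.mul x (Q.ld y Q.e))) y) ∧
      P.e = Q.e ∧ P.IsMiddleBol :=
  ⟨Q.starLoop hRB, fun _ _ => rfl, rfl, LoopStr.starLoop_isMiddleBol hRB⟩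
end
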